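/- Suppose sup_{x∈ℝ} r(x) ρ(x)² < ∞, where ρ is the generating function of a PFSS of (r z')' = q z. Then sup_{x∈ℝ} ρ(x) s(x) < ∞, where s(x) is the unique positive solution of ∫_{x-s}^{x+s} dt/(r ρ) = 1. -/

import Mathlib

/-! For `ρ = u v` the Wronskian identity `r (v' u - u' v) = 1` splits into the two terms
`r v' u` and `-r u' v`, both in `[0, 1]` by the signs of `u'` and `v'`; hence `|ρ'| ≤ 1 / r`,
i.e. `|(log ρ)'| ≤ 1 / (r ρ)`. So on the window `[x - s(x), x + s(x)]`, where `1 / (r ρ)` has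
integral `1`, `ρ` varies at most by a factor `e`, and there
`1 / (r ρ) = ρ / (r ρ²) ≥ ρ(x) / (e σ₁)`; integrating gives `2 ρ(x) s(x) ≤ e σ₁`. -/

open MeasureTheory Filter Set intervalIntegral

def IsSol (r q z : ℝ → ℝ) : Prop :=
  Differentiable ℝ z ∧ Differentiable ℝ (fun x => r x * deriv z x) ∧
    ∀ x, deriv (fun y => r y * deriv z y) x = q x * z x

def IsPFSS (r q u v : ℝ → ℝ) : Prop :=
  IsSol r q u ∧ IsSol r q v ∧
  (∀ x, 0 < u x) ∧ (∀ x, 0 < v x) ∧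
  (∀ x, deriv u x ≤ 0) ∧ (∀ x, 0 ≤ deriv v x) ∧
  (∀ x, r x * (deriv v x * u x - deriv u x * v x) = 1) ∧
  Tendsto (fun x => u x / v x) atTop (nhds 0) ∧
  Tendsto (fun x => v x / u x) atBot (nhds 0)

theorem sub_le_integral_of_deriv_le {g g' φ : ℝ → ℝ} {a b c d : ℝ}
    (hg : ∀ y ∈ Icc a b, HasDerivAt g (g' y) y) (hφ : IntervalIntegrable φ volume a b)
    (hg'φ : ∀ y ∈ Icc a b, g' y ≤ φ y) (hφ_nonneg : ∀ y ∈ Icc a b, 0 ≤ φ y)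
    (hac : a ≤ c) (hcd : c ≤ d) (hdb : d ≤ b) :
    g d - g c ≤ ∫ y in a..b, φ y := by
  have hsub : Icc c d ⊆ Icc a b := Icc_subset_Icc hac hdb
  have hφcd : IntervalIntegrable φ volume c d :=
    hφ.mono_set (by rwa [uIcc_of_le hcd, uIcc_of_le (hac.trans (hcd.trans hdb))])
  calc g d - g c ≤ ∫ y in c..d, φ y :=
        sub_le_integral_of_hasDeriv_right_of_le hcd
          (fun y hy => (hg y (hsub hy)).continuousAt.continuousWithinAt)
          (fun y hy => (hg y (hsub (Ioo_subset_Icc_self hy))).hasDerivWithinAt)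
          ((integrableOn_Icc_iff_integrableOn_Ioc).2 hφcd.1)
          (fun y hy => hg'φ y (hsub (Ioo_subset_Icc_self hy)))
    _ ≤ ∫ y in a..b, φ y :=
        integral_mono_interval hac hcd hdb
          ((ae_restrict_iff' measurableSet_Ioc).2 (Eventually.of_forall
            fun y hy => hφ_nonneg y (Ioc_subset_Icc_self hy))) hφ

theorem sub_le_integral_of_abs_deriv_le {g g' φ : ℝ → ℝ} {a b x t : ℝ}
    (hg : ∀ y ∈ Icc a b, HasDerivAt g (g' y) y) (hφ : IntervalIntegrable φ volume a b)
    (hg'φ : ∀ y ∈ Icc a b, |g' y| ≤ φ y) (hx : x ∈ Icc a b) (ht : t ∈ Icc a b) :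
    g x - g t ≤ ∫ y in a..b, φ y := by
  have hφ_nonneg : ∀ y ∈ Icc a b, 0 ≤ φ y := fun y hy => (abs_nonneg _).trans (hg'φ y hy)
  rcases le_total t x with htx | hxt
  · exact sub_le_integral_of_deriv_le hg hφ (fun y hy => (le_abs_self _).trans (hg'φ y hy))
      hφ_nonneg ht.1 htx hx.2
  · have := sub_le_integral_of_deriv_le (g := fun y => -g y) (fun y hy => (hg y hy).neg) hφ
      (fun y hy => (neg_le_abs _).trans (hg'φ y hy)) hφ_nonneg hx.1 hxt ht.2
    linarith

theorem mul_sub_le_exp_one_mul_of_integral_eq_one {r ρ : ℝ → ℝ} {σ a b x : ℝ} (hρ : Differentiable ℝ ρ)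
    (hρ_pos : ∀ t, 0 < ρ t) (hr : ∀ t, 0 < r t) (hρ' : ∀ t, |deriv ρ t| ≤ 1 / r t)
    (hσ : ∀ t, r t * ρ t ^ 2 ≤ σ) (hx : x ∈ Icc a b)
    (hint : ∫ t in a..b, 1 / (r t * ρ t) = 1) :
    ρ x * (b - a) ≤ Real.exp 1 * σ := by
  have hφ : IntervalIntegrable (fun t => 1 / (r t * ρ t)) volume a b := by
    by_contra hc
    rw [integral_undef hc] at hint
    exact zero_ne_one hint
  have hlog_deriv : ∀ t, |deriv ρ t / ρ t| ≤ 1 / (r t * ρ t) := fun t => by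
    rw [abs_div, abs_of_pos (hρ_pos t), ← div_div]
    exact div_le_div_of_nonneg_right (hρ' t) (hρ_pos t).le
  have hcomp : ∀ t ∈ Icc a b, ρ x ≤ Real.exp 1 * ρ t := fun t ht => by
    have := sub_le_integral_of_abs_deriv_le (g := fun y => Real.log (ρ y))
      (fun y _ => (hρ y).hasDerivAt.log (hρ_pos y).ne') hφ (fun y _ => hlog_deriv y) hx ht
    rwa [hint, sub_le_iff_le_add, ← Real.exp_le_exp, Real.exp_add, Real.exp_log (hρ_pos x),
      Real.exp_log (hρ_pos t)] at this
  have hσ_pos : 0 < σ := (mul_pos (hr x) (pow_pos (hρ_pos x) 2)).trans_le (hσ x)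
  have hlower : ∀ t ∈ Icc a b, ρ x / (Real.exp 1 * σ) ≤ 1 / (r t * ρ t) := fun t ht => by
    have hrρ2 := mul_pos (hr t) (pow_pos (hρ_pos t) 2)
    calc ρ x / (Real.exp 1 * σ) ≤ Real.exp 1 * ρ t / (Real.exp 1 * σ) := by
          gcongr; exact hcomp t ht
      _ = ρ t / σ := mul_div_mul_left _ _ (Real.exp_pos 1).ne'
      _ ≤ ρ t / (r t * ρ t ^ 2) := div_le_div_of_nonneg_left (hρ_pos t).le hrρ2 (hσ t)
      _ = 1 / (r t * ρ t) := by field_simp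
  have := integral_mono_on (hx.1.trans hx.2) intervalIntegrable_const hφ hlower
  rw [intervalIntegral.integral_const, smul_eq_mul, hint, mul_div_assoc',
    div_le_one (by positivity)] at this
  linarith

namespace IsPFSS

variable {r q u v : ℝ → ℝ}

theorem r_pos (h : IsPFSS r q u v) (x : ℝ) : 0 < r x := by
  obtain ⟨-, -, hu, hv, hu', hv', hW, -, -⟩ := h
  by_contra! hr
  nlinarith [hW x, mul_nonneg (hv' x) (hu x).le, mul_nonpos_of_nonpos_of_nonneg (hu' x) (hv x).le]

theorem mul_pos (h : IsPFSS r q u v) (x : ℝ) : 0 < u x * v x :=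
  _root_.mul_pos (h.2.2.1 x) (h.2.2.2.1 x)

theorem differentiable_mul (h : IsPFSS r q u v) : Differentiable ℝ fun x => u x * v x :=
  h.1.1.mul h.2.1.1

theorem abs_deriv_mul_le (h : IsPFSS r q u v) (x : ℝ) :
    |deriv (fun y => u y * v y) x| ≤ 1 / r x := by
  have hr := h.r_pos x
  obtain ⟨hu, hv, hu_pos, hv_pos, hu', hv', hW, -, -⟩ := h
  rw [deriv_fun_mul (hu.1 x) (hv.1 x), abs_le, le_div_iff₀ hr, ← neg_div, div_le_iff₀ hr]
  constructor
  · nlinarith [hW x, mul_nonneg (mul_nonneg hr.le (hu_pos x).le) (hv' x)]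
  · nlinarith [hW x, mul_nonpos_of_nonpos_of_nonneg
      (mul_nonpos_of_nonpos_of_nonneg (hu' x) (hv_pos x).le) hr.le]

end IsPFSS

theorem stmt13 (r q u v ρ s : ℝ → ℝ) (h : IsPFSS r q u v)
    (hρ : ∀ x, ρ x = u x * v x)
    (hs : ∀ x, 0 < s x ∧ (∫ t in (x - s x)..(x + s x), 1 / (r t * ρ t)) = 1)
    (σ₁ : ℝ) (hσ₁ : ∀ x, r x * ρ x ^ 2 ≤ σ₁) :
    ∃ C : ℝ, ∀ x, ρ x * s x ≤ C := by
  obtain rfl : ρ = fun x => u x * v x := funext hρ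
  refine ⟨Real.exp 1 * σ₁ / 2, fun x => ?_⟩
  obtain ⟨hsx, hint⟩ := hs x
  have hx : x ∈ Icc (x - s x) (x + s x) := ⟨by linarith, by linarith⟩
  have := mul_sub_le_exp_one_mul_of_integral_eq_one h.differentiable_mul
    h.mul_pos h.r_pos h.abs_deriv_mul_le hσ₁ hx hint
  rw [show x + s x - (x - s x) = 2 * s x by ring] at this
  linarith
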